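/- arXiv:2506.23449 — 2 statements merged into one kernel-verified Lean document; each statement's English description precedes it below -/
import Mathlib

section
/- Let A be a real symmetric positive definite m×m matrix and B a real symmetric m×m matrix with AB = BA. Let EI, ρ, c > 0 and define the 2m×2m block matrix C = [[−(c/ρ)I, (EI/ρ)A⁻¹B], [−A⁻¹B, 0]]. Then every eigenvalue η of C satisfies Re(η) ≤ 0. -/
open Matrix

lemma conj_dot {m : ℕ} (S : Matrix (Fin m) (Fin m) ℝ) (hS : S.IsSymm) (u w : Fin m → ℂ) :
    (starRingEnd ℂ) (star u ⬝ᵥ (S.map Complex.ofReal) *ᵥ w)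
      = star w ⬝ᵥ (S.map Complex.ofReal) *ᵥ u := by
  simp only [dotProduct, mulVec, Matrix.map_apply, Pi.star_apply, Finset.mul_sum, map_sum]
  rw [Finset.sum_comm]
  refine Finset.sum_congr rfl fun i _ => Finset.sum_congr rfl fun j _ => ?_
  rw [hS.apply i j]
  simp only [_root_.map_mul, Complex.conj_ofReal, Complex.conj_conj, RingHomCompTriple.comp_apply,
    Complex.conj_conj]
  have : (starRingEnd ℂ) (star (u j)) = u j := by simp
  rw [this, Complex.star_def]; ring

lemma re_dot_decomp {m : ℕ} (S : Matrix (Fin m) (Fin m) ℝ) (x : Fin m → ℂ) :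
    (star x ⬝ᵥ (S.map Complex.ofReal) *ᵥ x).re
      = (fun i => (x i).re) ⬝ᵥ S *ᵥ (fun i => (x i).re)
        + (fun i => (x i).im) ⬝ᵥ S *ᵥ (fun i => (x i).im) := by
  simp only [dotProduct, mulVec, Matrix.map_apply, Pi.star_apply, Finset.mul_sum,
    ← Finset.sum_add_distrib, Complex.re_sum]
  refine Finset.sum_congr rfl fun i _ => Finset.sum_congr rfl fun j _ => ?_
  simp [Complex.mul_re, Complex.mul_im]

lemma re_dot_nonneg {m : ℕ} {A : Matrix (Fin m) (Fin m) ℝ} (hA : A.PosSemidef)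
    (x : Fin m → ℂ) : 0 ≤ (star x ⬝ᵥ (A.map Complex.ofReal) *ᵥ x).re := by
  rw [re_dot_decomp]
  have h1 := hA.dotProduct_mulVec_nonneg (fun i => (x i).re)
  have h2 := hA.dotProduct_mulVec_nonneg (fun i => (x i).im)
  simp only [star_trivial, RCLike.re_to_real] at h1 h2
  exact add_nonneg h1 h2

lemma re_dot_pos {m : ℕ} {A : Matrix (Fin m) (Fin m) ℝ} (hA : A.PosDef)
    {x : Fin m → ℂ} (hx : x ≠ 0) : 0 < (star x ⬝ᵥ (A.map Complex.ofReal) *ᵥ x).re := by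
  rw [re_dot_decomp]
  have hor : (fun i => (x i).re) ≠ 0 ∨ (fun i => (x i).im) ≠ 0 := by
    by_contra h
    push_neg at h
    apply hx
    funext i
    have h1 := congrFun h.1 i
    have h2 := congrFun h.2 i
    simp only [Pi.zero_apply] at h1 h2
    exact Complex.ext h1 h2
  rcases hor with h | h
  · have h1 := hA.dotProduct_mulVec_pos h
    have h2 := hA.posSemidef.dotProduct_mulVec_nonneg (fun i => (x i).im)
    simp only [star_trivial, RCLike.re_to_real] at h1 h2
    linarith
  · have h1 := hA.posSemidef.dotProduct_mulVec_nonneg (fun i => (x i).re)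
    have h2 := hA.dotProduct_mulVec_pos h
    simp only [star_trivial, RCLike.re_to_real] at h1 h2
    linarith


theorem stmt_5 {m : ℕ} (A B : Matrix (Fin m) (Fin m) ℝ)
    (hA : A.PosDef) (hAsymm : A.IsSymm) (hBsymm : B.IsSymm)
    (hcomm : A * B = B * A)
    (EI ρ c : ℝ) (hEI : 0 < EI) (hρ : 0 < ρ) (hc : 0 < c)
    (C : Matrix (Fin m ⊕ Fin m) (Fin m ⊕ Fin m) ℝ)
    (hC : C = Matrix.fromBlocks (-(c / ρ) • 1) ((EI / ρ) • (A⁻¹ * B)) (-(A⁻¹ * B)) 0) :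
    ∀ η ∈ spectrum ℂ (C.map Complex.ofReal), η.re ≤ 0 := by
  intro η hη
  rw [spectrum.mem_iff, Matrix.isUnit_iff_isUnit_det, isUnit_iff_ne_zero, not_not] at hη
  obtain ⟨v, hv0, hv⟩ := Matrix.exists_mulVec_eq_zero_iff.mpr hη
  have heig : (C.map Complex.ofReal) *ᵥ v = η • v := by
    rw [sub_mulVec, sub_eq_zero, Algebra.algebraMap_eq_smul_one, smul_mulVec,
      one_mulVec] at hv
    exact hv.symm

  set Ac := A.map Complex.ofReal with hAc
  set Bc := B.map Complex.ofReal with hBc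
  set Nc := (A⁻¹ * B).map Complex.ofReal with hNc
  set x : Fin m → ℂ := v ∘ Sum.inl with hx
  set y : Fin m → ℂ := v ∘ Sum.inr with hy
  have hvelim : v = Sum.elim x y := by funext i; cases i <;> rfl
  -- block maps
  have hmapsmul : ∀ (r : ℝ) (M : Matrix (Fin m) (Fin m) ℝ),
      (r • M).map Complex.ofReal = (r : ℂ) • M.map Complex.ofReal := by
    intro r M; ext i j; simp
  have hmapneg : ∀ (M : Matrix (Fin m) (Fin m) ℝ),
      (-M).map Complex.ofReal = -(M.map Complex.ofReal) := by
    intro M; ext i j; simp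
  have hmapmul : ∀ (M N : Matrix (Fin m) (Fin m) ℝ),
      (M * N).map Complex.ofReal = M.map Complex.ofReal * N.map Complex.ofReal := by
    intro M N; ext i j; simp [Matrix.mul_apply]
  have hCc : C.map Complex.ofReal
      = Matrix.fromBlocks ((-(c / ρ) : ℂ) • 1) ((EI / ρ : ℂ) • Nc) (-Nc) 0 := by
    rw [hC]
    ext i j
    rcases i with i | i <;> rcases j with j | j <;>
      simp [Matrix.fromBlocks, Matrix.map_apply, Matrix.one_apply, apply_ite, hNc]
    split_ifs <;> tauto
  have heig' := heig
  rw [hCc, hvelim, Matrix.fromBlocks_mulVec] at heig'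
  have hsmul : η • Sum.elim x y = Sum.elim (η • x) (η • y) := by
    funext i; cases i <;> rfl
  rw [hsmul] at heig'
  have e1 : ((-(c / ρ) : ℂ) • (1 : Matrix (Fin m) (Fin m) ℂ)) *ᵥ x + ((EI / ρ : ℂ) • Nc) *ᵥ y
      = η • x := by funext i; exact congrFun heig' (Sum.inl i)
  have e2 : (-Nc) *ᵥ x + (0 : Matrix (Fin m) (Fin m) ℂ) *ᵥ y = η • y := by
    funext i; exact congrFun heig' (Sum.inr i)
  rw [zero_mulVec, add_zero, neg_mulVec] at e2
  rw [smul_mulVec, smul_mulVec, one_mulVec] at e1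
  -- A * (A⁻¹ * B) = B
  have hAdet : IsUnit A.det := isUnit_iff_ne_zero.mpr (ne_of_gt hA.det_pos)
  have hAB : A * (A⁻¹ * B) = B := by
    rw [← mul_assoc, Matrix.mul_nonsing_inv A hAdet, one_mul]
  have hAN : Ac * Nc = Bc := by
    rw [hAc, hNc, hBc, ← hmapmul, hAB]
  set a1 := star x ⬝ᵥ Ac *ᵥ x with ha1def
  set a2 := star y ⬝ᵥ Ac *ᵥ y with ha2def
  set b1 := star x ⬝ᵥ Bc *ᵥ y with hb1def
  set b2 := star y ⬝ᵥ Bc *ᵥ x with hb2def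
  have E1 : η * a1 = -((c : ℂ)/(ρ : ℂ)) * a1 + ((EI : ℂ)/(ρ : ℂ)) * b1 := by
    have h := congrArg (fun w => star x ⬝ᵥ Ac *ᵥ w) e1
    simp only [mulVec_add, mulVec_smul, dotProduct_add, dotProduct_smul, smul_eq_mul,
      Matrix.mulVec_mulVec, hAN] at h
    linear_combination -h
  have E2 : η * a2 = -b2 := by
    have h := congrArg (fun w => star y ⬝ᵥ Ac *ᵥ w) e2
    simp only [mulVec_neg, dotProduct_neg, Matrix.mulVec_mulVec, hAN, mulVec_smul,
      dotProduct_smul, smul_eq_mul] at h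
    linear_combination -h
  have ha1c : (starRingEnd ℂ) a1 = a1 := conj_dot A hAsymm x x
  have ha2c : (starRingEnd ℂ) a2 = a2 := conj_dot A hAsymm y y
  have hbc : (starRingEnd ℂ) b2 = b1 := conj_dot B hBsymm y x
  have ha1im : a1.im = 0 := by
    have h := congrArg Complex.im ha1c
    simp only [Complex.conj_im] at h
    linarith
  have ha2im : a2.im = 0 := by
    have h := congrArg Complex.im ha2c
    simp only [Complex.conj_im] at h
    linarith
  have hb2re : b2.re = b1.re := by
    have h := congrArg Complex.re hbc
    simpa using h
  have EQ : η * ((ρ : ℂ) * a1 + (EI : ℂ) * a2)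
      = -(c : ℂ) * a1 + (EI : ℂ) * b1 - (EI : ℂ) * b2 := by
    have hρ0 : (ρ : ℂ) ≠ 0 := by exact_mod_cast hρ.ne'
    have h1 : (ρ : ℂ) * ((c : ℂ)/(ρ : ℂ)) = (c : ℂ) := by
      rw [mul_comm]; exact div_mul_cancel₀ _ hρ0
    have h2 : (ρ : ℂ) * ((EI : ℂ)/(ρ : ℂ)) = (EI : ℂ) := by
      rw [mul_comm]; exact div_mul_cancel₀ _ hρ0
    linear_combination (ρ : ℂ) * E1 + (EI : ℂ) * E2 - a1 * h1 + b1 * h2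
  have EQre : η.re * (ρ * a1.re + EI * a2.re) = -(c * a1.re) := by
    have h := congrArg Complex.re EQ
    simp only [Complex.mul_re, Complex.add_re, Complex.add_im, Complex.sub_re, Complex.neg_re,
      Complex.mul_im, Complex.ofReal_re, Complex.ofReal_im, ha1im, ha2im] at h
    rw [hb2re] at h
    linear_combination h
  have hx0 : x ≠ 0 ∨ y ≠ 0 := by
    by_contra hcon
    push_neg at hcon
    apply hv0
    rw [hvelim, hcon.1, hcon.2]
    funext i; cases i <;> rfl
  have ha1nn : 0 ≤ a1.re := re_dot_nonneg hA.posSemidef x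
  have ha2nn : 0 ≤ a2.re := re_dot_nonneg hA.posSemidef y
  have hD : 0 < ρ * a1.re + EI * a2.re := by
    rcases hx0 with h | h
    · have := re_dot_pos hA h
      nlinarith
    · have := re_dot_pos hA h
      nlinarith
  by_contra hpos
  push_neg at hpos
  nlinarith [mul_pos hpos hD]
end

section
/- If EI, ρ, c are positive constants, A is real symmetric positive definite, B is real symmetric, and AB = BA, then for every eigenvalue η of C = [[−(c/ρ)I, (EI/ρ)A⁻¹B], [−A⁻¹B, 0]] with eigenvector (ζ₁, ζ₂), one has −((ρ/EI)ζ₁*ζ₁ + ζ₂*ζ₂)·Re(η) = (c/EI)·ζ₁*ζ₁; consequently Re(η) ≤ 0. -/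
open Matrix

theorem stmt_7 {m : ℕ} (A B : Matrix (Fin m) (Fin m) ℝ)
    (hA : A.PosDef) (hAsymm : A.IsSymm) (hBsymm : B.IsSymm)
    (hcomm : A * B = B * A)
    (EI ρ c : ℝ) (hEI : 0 < EI) (hρ : 0 < ρ) (hc : 0 < c)
    (C : Matrix (Fin m ⊕ Fin m) (Fin m ⊕ Fin m) ℂ)
    (hC : C = Matrix.fromBlocks (-((c : ℂ) / ρ) • 1) (((EI : ℂ) / ρ) • ((A⁻¹ * B).map Complex.ofReal))
        (-((A⁻¹ * B).map Complex.ofReal)) 0)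
    (η : ℂ) (ζ : Fin m ⊕ Fin m → ℂ) (hζ : ζ ≠ 0)
    (heig : C.mulVec ζ = η • ζ) :
    -(((ρ : ℂ) / EI) * (star (ζ ∘ Sum.inl) ⬝ᵥ (ζ ∘ Sum.inl)) + star (ζ ∘ Sum.inr) ⬝ᵥ (ζ ∘ Sum.inr))
        * (η.re : ℂ) = ((c : ℂ) / EI) * (star (ζ ∘ Sum.inl) ⬝ᵥ (ζ ∘ Sum.inl)) ∧ η.re ≤ 0 := by
  have hdet : IsUnit A.det := (Matrix.isUnit_iff_isUnit_det A).mp hA.isUnit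
  have hinv : A⁻¹ * A = 1 := Matrix.nonsing_inv_mul A hdet
  have hinv' : A * A⁻¹ = 1 := Matrix.mul_nonsing_inv A hdet
  have hBAinv : B * A⁻¹ = A⁻¹ * B := by
    calc B * A⁻¹ = (A⁻¹ * (A * B)) * A⁻¹ := by rw [← mul_assoc, hinv, one_mul]
    _ = A⁻¹ * (B * (A * A⁻¹)) := by rw [hcomm, mul_assoc, mul_assoc]
    _ = A⁻¹ * B := by rw [hinv', mul_one]
  have hNsymm : (A⁻¹ * B)ᵀ = A⁻¹ * B := by
    rw [Matrix.transpose_mul, Matrix.transpose_nonsing_inv, hAsymm.eq, hBsymm.eq, hBAinv]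
  set M : Matrix (Fin m) (Fin m) ℂ := (A⁻¹ * B).map Complex.ofReal with hMdef
  have hMH : Mᴴ = M := by
    ext i j
    have hent : (A⁻¹ * B) j i = (A⁻¹ * B) i j := by
      conv_lhs => rw [← hNsymm]
      rfl
    simp only [hMdef, Matrix.conjTranspose_apply, Matrix.map_apply, RCLike.star_def,
      Complex.conj_ofReal]
    exact congrArg _ hent
  set ζ₁ : Fin m → ℂ := ζ ∘ Sum.inl with hz1
  set ζ₂ : Fin m → ℂ := ζ ∘ Sum.inr with hz2
  rw [hC, fromBlocks_mulVec] at heig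
  have e1 : (-((c : ℂ) / ρ)) • ζ₁ + ((EI : ℂ) / ρ) • (M *ᵥ ζ₂) = η • ζ₁ := by
    funext i
    have h := congrFun heig (Sum.inl i)
    simpa [hz1, hz2, Matrix.neg_mulVec, Matrix.smul_mulVec, Matrix.one_mulVec, neg_smul] using h
  have e2 : -(M *ᵥ ζ₁) = η • ζ₂ := by
    funext i
    have := congrFun heig (Sum.inr i)
    simpa [hz1, hz2, neg_mulVec] using this
  set aR : ℝ := ∑ i, Complex.normSq (ζ₁ i) with haRdef
  set bR : ℝ := ∑ i, Complex.normSq (ζ₂ i) with hbRdef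
  have haC : star ζ₁ ⬝ᵥ ζ₁ = (aR : ℂ) := by
    simp only [dotProduct, Pi.star_apply, haRdef]
    push_cast
    refine Finset.sum_congr rfl fun i _ => ?_
    rw [RCLike.star_def, mul_comm, Complex.mul_conj]
  have hbC : star ζ₂ ⬝ᵥ ζ₂ = (bR : ℂ) := by
    simp only [dotProduct, Pi.star_apply, hbRdef]
    push_cast
    refine Finset.sum_congr rfl fun i _ => ?_
    rw [RCLike.star_def, mul_comm, Complex.mul_conj]
  set w : ℂ := star ζ₂ ⬝ᵥ (M *ᵥ ζ₁) with hwdef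
  have hws : star ζ₁ ⬝ᵥ (M *ᵥ ζ₂) = star w := by
    have h1 : star w = star (M *ᵥ ζ₁) ⬝ᵥ ζ₂ := by
      rw [hwdef, star_dotProduct, star_star]
    rw [h1, star_mulVec, hMH, ← dotProduct_mulVec]
  have E1 : -((c : ℂ) / ρ) * aR + ((EI : ℂ) / ρ) * star w = η * aR := by
    have := congrArg (fun v => star ζ₁ ⬝ᵥ v) e1
    simpa [dotProduct_add, dotProduct_smul, smul_eq_mul, haC, hws] using this
  have E2 : -w = η * bR := by
    have := congrArg (fun v => star ζ₂ ⬝ᵥ v) e2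
    simpa [dotProduct_smul, smul_eq_mul, hbC, hwdef] using this
  have hw' : w = -(η * (bR : ℂ)) := by linear_combination -E2
  have hsw : star w = -((starRingEnd ℂ) η * (bR : ℂ)) := by
    rw [hw']
    simp [RCLike.star_def, _root_.map_mul, Complex.conj_ofReal]
  have hρ0 : (ρ : ℂ) ≠ 0 := Complex.ofReal_ne_zero.mpr hρ.ne'
  rw [hsw] at E1
  field_simp [hρ0] at E1
  have key : (ρ : ℂ) * η * aR + (EI : ℂ) * (starRingEnd ℂ) η * bR + (c : ℂ) * aR = 0 := by
    apply mul_left_cancel₀ hρ0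
    linear_combination (-(ρ : ℂ)) * E1
  have keyre : ρ * η.re * aR + EI * η.re * bR + c * aR = 0 := by
    have := congrArg Complex.re key
    simpa [Complex.add_re, Complex.mul_re, Complex.mul_im, Complex.ofReal_re,
      Complex.ofReal_im, Complex.conj_re, Complex.conj_im] using this
  have haR0 : 0 ≤ aR := Finset.sum_nonneg fun i _ => Complex.normSq_nonneg _
  have hbR0 : 0 ≤ bR := Finset.sum_nonneg fun i _ => Complex.normSq_nonneg _
  have habpos : 0 < aR + bR := by
    obtain ⟨j, hj⟩ := Function.ne_iff.mp hζ
    cases j with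
    | inl i =>
      have h1 : 0 < Complex.normSq (ζ₁ i) := Complex.normSq_pos.mpr hj
      have h2 : Complex.normSq (ζ₁ i) ≤ aR :=
        Finset.single_le_sum (fun i _ => Complex.normSq_nonneg (ζ₁ i)) (Finset.mem_univ i)
      linarith
    | inr i =>
      have h1 : 0 < Complex.normSq (ζ₂ i) := Complex.normSq_pos.mpr hj
      have h2 : Complex.normSq (ζ₂ i) ≤ bR :=
        Finset.single_le_sum (fun i _ => Complex.normSq_nonneg (ζ₂ i)) (Finset.mem_univ i)
      linarith
  have hre : η.re ≤ 0 := by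
    by_contra hcon
    push_neg at hcon
    have hXa : 0 ≤ ρ * η.re * aR := mul_nonneg (mul_nonneg hρ.le hcon.le) haR0
    have hXb : 0 ≤ EI * η.re * bR := mul_nonneg (mul_nonneg hEI.le hcon.le) hbR0
    have hXc : 0 ≤ c * aR := mul_nonneg hc.le haR0
    have h1 : c * aR = 0 := by linarith
    have haz : aR = 0 := by
      rcases mul_eq_zero.mp h1 with h | h
      · exact absurd h hc.ne'
      · exact h
    have hbz : 0 < bR := by linarith
    have : 0 < EI * η.re * bR := mul_pos (mul_pos hEI hcon) hbz
    rw [haz] at keyre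
    simp at keyre
    rcases keyre with (h | h) | h
    · exact absurd h hEI.ne'
    · exact absurd h hcon.ne'
    · exact absurd h hbz.ne' 
  refine ⟨?_, hre⟩
  rw [haC, hbC]
  have hgoal : -((ρ / EI) * aR + bR) * η.re = (c / EI) * aR := by
    field_simp
    linarith [keyre]
  calc -((ρ : ℂ) / EI * (aR : ℂ) + (bR : ℂ)) * (η.re : ℂ)
      = ((-((ρ / EI) * aR + bR) * η.re : ℝ) : ℂ) := by push_cast; ring
    _ = (((c / EI) * aR : ℝ) : ℂ) := by rw [hgoal]
    _ = ((c : ℂ) / EI) * (aR : ℂ) := by push_cast; ring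
end
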